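/- The commutator subgroup [G,G] of G coincides with the center of G and equals the two-element subgroup {I, −I}. Consequently the abelianization G/[G,G] is isomorphic to (ℤ/2ℤ)⁴. -/

import Mathlib

/-
T₀, …, T₄ are pairwise anticommuting involutions with T₄ = T₀T₁T₂T₃, so every element of G is
±T₀^a T₁^b T₂^c T₃^d. Every element of G commutes or anticommutes with each Tⱼ, and recording
which of T₀, …, T₃ it anticommutes with is a homomorphism G → (ℤ/2)⁴. It is onto, and the monomial
±T₀^a T₁^b T₂^c T₃^d lies in its kernel only for a = b = c = d = 0, so the kernel is {±I}. The
kernel contains [G,G] because the target is abelian, and −I = [T₀,T₁]; it is the center because an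
element is central iff it commutes with the generators.
-/

open Matrix Complex

noncomputable def T : Fin 5 → Matrix (Fin 4) (Fin 4) ℂ :=
  ![!![1,0,0,0; 0,-1,0,0; 0,0,1,0; 0,0,0,-1],
    !![0,I,0,0; -I,0,0,0; 0,0,0,-I; 0,0,I,0],
    !![0,1,0,0; 1,0,0,0; 0,0,0,1; 0,0,1,0],
    !![0,0,0,1; 0,0,-1,0; 0,-1,0,0; 1,0,0,0],
    !![0,0,0,I; 0,0,-I,0; 0,I,0,0; -I,0,0,0]]

/-- The subgroup of `GL(4,ℂ)` generated by `T 0, …, T 4`. -/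
noncomputable def Ggrp : Subgroup ((Matrix (Fin 4) (Fin 4) ℂ)ˣ) :=
  Subgroup.closure {g | ∃ m : Fin 5, (g : Matrix (Fin 4) (Fin 4) ℂ) = T m}

/-- The underlying matrix of an element of `G`. -/
noncomputable def mat (v : Ggrp) : Matrix (Fin 4) (Fin 4) ℂ :=
  ((v : (Matrix (Fin 4) (Fin 4) ℂ)ˣ) : Matrix (Fin 4) (Fin 4) ℂ)

section Anticommute

variable {R : Type*} [Ring R]

def Anticommute (a b : R) : Prop := a * b = -(b * a)

variable {a b c : R}

theorem Anticommute.mul_left (ha : Anticommute a c) (hb : Anticommute b c) :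
    Commute (a * b) c := by
  rw [Commute, SemiconjBy, mul_assoc, hb, mul_neg, ← mul_assoc, ha, neg_mul, neg_neg, mul_assoc]

theorem Anticommute.mul_commute (ha : Anticommute a c) (hb : Commute b c) :
    Anticommute (a * b) c := by
  rw [Anticommute, mul_assoc, hb.eq, ← mul_assoc, ha, neg_mul, mul_assoc]

theorem Commute.mul_anticommute (ha : Commute a c) (hb : Anticommute b c) :
    Anticommute (a * b) c := by
  rw [Anticommute, mul_assoc, hb, mul_neg, ← mul_assoc, ha.eq, mul_assoc]

theorem Anticommute.units_inv_left {u : Rˣ} (h : Anticommute (u : R) c) :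
    Anticommute (↑u⁻¹ : R) c := by
  have h' : c * u = -(u * c) := by rw [h, neg_neg]
  calc (↑u⁻¹ : R) * c = ↑u⁻¹ * (c * u) * ↑u⁻¹ := by rw [mul_assoc, Units.mul_inv_cancel_right]
    _ = -(c * ↑u⁻¹) := by rw [h', mul_neg, neg_mul, Units.inv_mul_cancel_left]

theorem Anticommute.not_commute [NeZero (2 : R)] {u v : Rˣ} (h : Anticommute (u : R) v) :
    ¬Commute (u : R) v := by
  intro hc
  have h2 : (2 : R) * ↑(v * u) = 0 := by
    rw [Units.val_mul, two_mul]
    nth_rewrite 1 [← hc.eq]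
    rw [h, neg_add_cancel]
  exact two_ne_zero ((v * u).mul_left_eq_zero.mp h2)

end Anticommute

section SignedCentralizer

variable {R : Type*} [Ring R]

def signedCentralizer (a : R) : Subgroup Rˣ where
  carrier := {u | Commute (u : R) a ∨ Anticommute (u : R) a}
  one_mem' := Or.inl (Commute.one_left a)
  mul_mem' := by
    rintro u v (hu | hu) (hv | hv)
    exacts [Or.inl (hu.mul_left hv), Or.inr (hu.mul_anticommute hv),
      Or.inr (hu.mul_commute hv), Or.inl (hu.mul_left hv)]
  inv_mem' := by
    rintro u (hu | hu)
    exacts [Or.inl hu.units_inv_left, Or.inr hu.units_inv_left]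

theorem mem_signedCentralizer {a : R} {u : Rˣ} :
    u ∈ signedCentralizer a ↔ Commute (u : R) a ∨ Anticommute (u : R) a :=
  Iff.rfl

open Classical in
noncomputable def commParity (a x : R) : ZMod 2 := if Commute x a then 0 else 1

theorem commParity_eq_zero_iff {a x : R} : commParity a x = 0 ↔ Commute x a := by
  unfold commParity
  split_ifs with h <;> simp [h]

variable [NeZero (2 : R)]

theorem commParity_of_anticommute {a u : Rˣ} (h : Anticommute (u : R) a) :
    commParity (a : R) u = 1 :=
  if_neg h.not_commute

theorem commParity_mul {a u v : Rˣ} (hu : u ∈ signedCentralizer (a : R))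
    (hv : v ∈ signedCentralizer (a : R)) :
    commParity (a : R) ↑(u * v) = commParity (a : R) u + commParity (a : R) v := by
  rw [Units.val_mul]
  rcases hu with hu | hu <;> rcases hv with hv | hv
  · rw [commParity_eq_zero_iff.mpr hu, commParity_eq_zero_iff.mpr hv,
      commParity_eq_zero_iff.mpr (hu.mul_left hv), add_zero]
  · rw [commParity_eq_zero_iff.mpr hu, commParity_of_anticommute hv,
      ← Units.val_mul, commParity_of_anticommute (hu.mul_anticommute hv), zero_add]
  · rw [commParity_of_anticommute hu, commParity_eq_zero_iff.mpr hv,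
      ← Units.val_mul, commParity_of_anticommute (hu.mul_commute hv), add_zero]
  · rw [commParity_of_anticommute hu, commParity_of_anticommute hv,
      commParity_eq_zero_iff.mpr (hu.mul_left hv)]
    decide

noncomputable def anticommParity {ι : Type*} (a : ι → Rˣ) (H : Subgroup Rˣ)
    (hH : ∀ i, H ≤ signedCentralizer (a i : R)) : H →* Multiplicative (ι → ZMod 2) where
  toFun u := .ofAdd fun i => commParity (a i : R) (u : Rˣ)
  map_one' := by
    ext i
    exact commParity_eq_zero_iff.mpr (Commute.one_left _)
  map_mul' u v := by
    ext i
    exact commParity_mul (hH i u.2) (hH i v.2)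

theorem mem_ker_anticommParity {ι : Type*} {a : ι → Rˣ} {H : Subgroup Rˣ}
    {hH : ∀ i, H ≤ signedCentralizer (a i : R)} {u : H} :
    u ∈ (anticommParity a H hH).ker ↔ ∀ i, Commute ((u : Rˣ) : R) (a i) := by
  simp [MonoidHom.mem_ker, anticommParity, ← ofAdd_zero, funext_iff, commParity_eq_zero_iff]

end SignedCentralizer

theorem Matrix.one_fin_four {α : Type*} [Zero α] [One α] :
    (1 : Matrix (Fin 4) (Fin 4) α) = !![1, 0, 0, 0; 0, 1, 0, 0; 0, 0, 1, 0; 0, 0, 0, 1] := by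
  ext i j
  fin_cases i <;> fin_cases j <;> rfl

instance Matrix.neZero_two {n α : Type*} [DecidableEq n] [Nonempty n] [AddMonoidWithOne α]
    [NeZero (2 : α)] : NeZero (2 : Matrix n n α) := by
  obtain ⟨i⟩ := ‹Nonempty n›
  exact ⟨fun h => two_ne_zero (α := α) (by simpa [Matrix.ofNat_apply] using congrFun₂ h i i)⟩

theorem T_mul_self (i : Fin 5) : T i * T i = 1 := by
  fin_cases i <;> simp [T, one_fin_four]

theorem T_anticommute {i j : Fin 5} (h : i ≠ j) : Anticommute (T i) (T j) := by
  fin_cases i <;> fin_cases j <;> first | exact absurd rfl h | simp [Anticommute, T]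

theorem T_four : T 4 = T 0 * T 1 * T 2 * T 3 := by
  simp [T]

theorem T_mul_T_mul_self (i : Fin 5) (x : Matrix (Fin 4) (Fin 4) ℂ) : T i * (T i * x) = x := by
  rw [← mul_assoc, T_mul_self, one_mul]

-- Oriented by `j < i` so that `simp` sorts products of generators instead of looping.
theorem T_mul_T_of_lt {i j : Fin 5} (h : j < i) : T i * T j = -(T j * T i) :=
  T_anticommute h.ne'

theorem T_mul_T_mul_of_lt {i j : Fin 5} (h : j < i) (x : Matrix (Fin 4) (Fin 4) ℂ) :
    T i * (T j * x) = -(T j * (T i * x)) := by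
  rw [← mul_assoc, T_mul_T_of_lt h, neg_mul, mul_assoc]

namespace Ggrp

noncomputable def unitT (i : Fin 5) : (Matrix (Fin 4) (Fin 4) ℂ)ˣ :=
  ⟨T i, T i, T_mul_self i, T_mul_self i⟩

@[simp] theorem val_unitT (i : Fin 5) : (unitT i : Matrix (Fin 4) (Fin 4) ℂ) = T i := rfl

noncomputable def gen (i : Fin 5) : Ggrp :=
  ⟨unitT i, Subgroup.subset_closure ⟨i, rfl⟩⟩

theorem mat_injective : Function.Injective mat :=
  fun _ _ h => Subtype.ext (Units.ext h)

@[simp] theorem mat_one : mat 1 = 1 := rfl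

@[simp] theorem mat_mul (u v : Ggrp) : mat (u * v) = mat u * mat v := rfl

@[simp] theorem mat_gen (i : Fin 5) : mat (gen i) = T i := rfl

theorem closure_range_gen : Subgroup.closure (Set.range gen) = ⊤ := by
  refine Eq.trans ?_ Subgroup.closure_closure_coe_preimage
  congr 1
  ext u
  constructor
  · rintro ⟨i, rfl⟩
    exact ⟨i, rfl⟩
  · rintro ⟨i, hi⟩
    exact ⟨i, mat_injective hi.symm⟩

theorem gen_inv (i : Fin 5) : (gen i)⁻¹ = gen i :=
  inv_eq_of_mul_eq_one_right (mat_injective (T_mul_self i))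

theorem gen_four : gen 4 = gen 0 * gen 1 * gen 2 * gen 3 :=
  mat_injective T_four

open scoped commutatorElement

noncomputable def negOne : Ggrp := ⁅gen 0, gen 1⁆

theorem mat_negOne : mat negOne = -1 := by
  simp only [negOne, commutatorElement_def, gen_inv, mat_mul, mat_gen, mul_assoc,
    T_mul_T_mul_of_lt (show (0 : Fin 5) < 1 by decide), T_mul_self, T_mul_T_mul_self, mul_neg]

noncomputable def monomial (s a b c d : Bool) : Ggrp :=
  cond s negOne 1 * (cond a (gen 0) 1 * (cond b (gen 1) 1 * (cond c (gen 2) 1 * cond d (gen 3) 1)))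

theorem mat_monomial (s a b c d : Bool) :
    mat (monomial s a b c d) =
      cond s (-1) 1 * (cond a (T 0) 1 * (cond b (T 1) 1 * (cond c (T 2) 1 * cond d (T 3) 1))) := by
  simp [monomial, Bool.apply_cond mat, mat_negOne]

theorem gen_zero_mul_monomial (s a b c d : Bool) :
    gen 0 * monomial s a b c d = monomial s (!a) b c d := by
  apply mat_injective
  rw [mat_mul, mat_monomial, mat_monomial, mat_gen]
  cases s <;> cases a <;> cases b <;> cases c <;> cases d <;>
    simp [T_mul_self, T_mul_T_mul_self]

theorem gen_one_mul_monomial (s a b c d : Bool) :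
    gen 1 * monomial s a b c d = monomial (s ^^ a) a (!b) c d := by
  apply mat_injective
  rw [mat_mul, mat_monomial, mat_monomial, mat_gen]
  cases s <;> cases a <;> cases b <;> cases c <;> cases d <;>
    simp (disch := decide) [T_mul_self, T_mul_T_mul_self, T_mul_T_of_lt, T_mul_T_mul_of_lt]

theorem gen_two_mul_monomial (s a b c d : Bool) :
    gen 2 * monomial s a b c d = monomial (s ^^ (a ^^ b)) a b (!c) d := by
  apply mat_injective
  rw [mat_mul, mat_monomial, mat_monomial, mat_gen]
  cases s <;> cases a <;> cases b <;> cases c <;> cases d <;>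
    simp (disch := decide) [T_mul_self, T_mul_T_mul_self, T_mul_T_of_lt, T_mul_T_mul_of_lt]

theorem gen_three_mul_monomial (s a b c d : Bool) :
    gen 3 * monomial s a b c d = monomial (s ^^ (a ^^ (b ^^ c))) a b c (!d) := by
  apply mat_injective
  rw [mat_mul, mat_monomial, mat_monomial, mat_gen]
  cases s <;> cases a <;> cases b <;> cases c <;> cases d <;>
    simp (disch := decide) [T_mul_self, T_mul_T_of_lt, T_mul_T_mul_of_lt]

theorem exists_gen_mul_monomial (i : Fin 5) (s a b c d : Bool) :
    ∃ s' a' b' c' d', gen i * monomial s a b c d = monomial s' a' b' c' d' := by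
  match i with
  | 0 => exact ⟨_, _, _, _, _, gen_zero_mul_monomial s a b c d⟩
  | 1 => exact ⟨_, _, _, _, _, gen_one_mul_monomial s a b c d⟩
  | 2 => exact ⟨_, _, _, _, _, gen_two_mul_monomial s a b c d⟩
  | 3 => exact ⟨_, _, _, _, _, gen_three_mul_monomial s a b c d⟩
  | 4 => exact ⟨_, _, _, _, _, by
      simp only [gen_four, mul_assoc, gen_three_mul_monomial, gen_two_mul_monomial,
        gen_one_mul_monomial, gen_zero_mul_monomial]
      rfl⟩

theorem exists_monomial_eq (u : Ggrp) : ∃ s a b c d, monomial s a b c d = u := by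
  have step : ∀ i y, (∃ s a b c d, monomial s a b c d = y) →
      ∃ s a b c d, monomial s a b c d = gen i * y := by
    rintro i _ ⟨s, a, b, c, d, rfl⟩
    obtain ⟨s', a', b', c', d', h⟩ := exists_gen_mul_monomial i s a b c d
    exact ⟨s', a', b', c', d', h.symm⟩
  have hu : u ∈ Subgroup.closure (Set.range gen) := closure_range_gen ▸ Subgroup.mem_top u
  induction hu using Subgroup.closure_induction_left with
  | one => exact ⟨false, false, false, false, false, by simp [monomial]⟩
  | mul_left _ hx y _ ih =>
    obtain ⟨i, rfl⟩ := hx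
    exact step i y ih
  | inv_mul_cancel _ hx y _ ih =>
    obtain ⟨i, rfl⟩ := hx
    rw [gen_inv]
    exact step i y ih

theorem le_signedCentralizer (j : Fin 5) :
    Ggrp ≤ signedCentralizer (unitT j : Matrix (Fin 4) (Fin 4) ℂ) := by
  refine (Subgroup.closure_le _).mpr ?_
  rintro g ⟨i, hi⟩
  rw [SetLike.mem_coe, mem_signedCentralizer, hi, val_unitT]
  rcases eq_or_ne i j with rfl | h
  exacts [Or.inl (Commute.refl _), Or.inr (T_anticommute h)]

noncomputable def parity : Ggrp →* Multiplicative (Fin 4 → ZMod 2) :=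
  anticommParity (fun j : Fin 4 => unitT j.castSucc) Ggrp fun j => le_signedCentralizer j.castSucc

theorem parity_gen (i : Fin 4) :
    parity (gen i.castSucc) = .ofAdd fun j => if i = j then 0 else 1 := by
  refine congrArg Multiplicative.ofAdd (funext fun j => ?_)
  split_ifs with h
  · subst h
    exact commParity_eq_zero_iff.mpr (Commute.refl _)
  · exact commParity_of_anticommute (a := unitT j.castSucc) (u := unitT i.castSucc)
      (T_anticommute (Fin.castSucc_injective _ |>.ne h))

theorem parity_negOne : parity negOne = 1 := by
  rw [negOne, map_commutatorElement, commutatorElement_eq_one_iff_commute]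
  exact Commute.all _ _

theorem parity_monomial (s a b c d : Bool) :
    parity (monomial s a b c d) =
      cond a (.ofAdd ![0, 1, 1, 1]) 1 * (cond b (.ofAdd ![1, 0, 1, 1]) 1 *
        (cond c (.ofAdd ![1, 1, 0, 1]) 1 * cond d (.ofAdd ![1, 1, 1, 0]) 1)) := by
  have h0 : parity (gen 0) = .ofAdd ![0, 1, 1, 1] := (parity_gen 0).trans (by decide)
  have h1 : parity (gen 1) = .ofAdd ![1, 0, 1, 1] := (parity_gen 1).trans (by decide)
  have h2 : parity (gen 2) = .ofAdd ![1, 1, 0, 1] := (parity_gen 2).trans (by decide)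
  have h3 : parity (gen 3) = .ofAdd ![1, 1, 1, 0] := (parity_gen 3).trans (by decide)
  simp only [monomial, map_mul, Bool.apply_cond parity, map_one, parity_negOne, Bool.cond_self,
    one_mul, h0, h1, h2, h3]

theorem monomial_mem_ker_parity_iff (s a b c d : Bool) :
    monomial s a b c d ∈ parity.ker ↔ a = false ∧ b = false ∧ c = false ∧ d = false := by
  rw [MonoidHom.mem_ker, parity_monomial]
  revert a b c d
  decide

theorem parity_surjective : Function.Surjective parity := by
  intro y
  obtain ⟨a, b, c, d, h⟩ : ∃ a b c d : Bool, parity (monomial false a b c d) = y := by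
    simp only [parity_monomial]
    revert y
    decide
  exact ⟨_, h⟩

theorem mem_ker_parity_iff (u : Ggrp) : u ∈ parity.ker ↔ u = 1 ∨ u = negOne := by
  constructor
  · intro hu
    obtain ⟨s, a, b, c, d, rfl⟩ := exists_monomial_eq u
    obtain ⟨rfl, rfl, rfl, rfl⟩ := (monomial_mem_ker_parity_iff s a b c d).mp hu
    cases s <;> simp [monomial]
  · rintro (rfl | rfl)
    exacts [one_mem _, parity_negOne]

theorem commutator_eq_ker_parity : commutator Ggrp = parity.ker := by
  refine le_antisymm (Abelianization.commutator_subset_ker parity) fun u hu => ?_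
  rcases (mem_ker_parity_iff u).mp hu with rfl | rfl
  · exact one_mem _
  · rw [commutator_def]
    exact Subgroup.commutator_mem_commutator (Subgroup.mem_top _) (Subgroup.mem_top _)

theorem center_eq_ker_parity : Subgroup.center Ggrp = parity.ker := by
  refine le_antisymm (fun u hu => ?_) fun u hu => ?_
  · refine mem_ker_anticommParity.mpr fun j => ?_
    exact (congrArg mat (Subgroup.mem_center_iff.mp hu (gen j.castSucc))).symm
  · rcases (mem_ker_parity_iff u).mp hu with rfl | rfl
    · exact one_mem _
    · exact Subgroup.mem_center_iff.mpr fun g => mat_injective (by simp [mat_negOne])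

end Ggrp

/-- The commutator subgroup of `G` coincides with the center and equals `{I,-I}`;
the abelianization of `G` is isomorphic to `(ℤ/2ℤ)⁴`. -/
theorem stmt5 :
    commutator Ggrp = Subgroup.center Ggrp ∧
    (∀ u : Ggrp, u ∈ commutator Ggrp ↔ (mat u = 1 ∨ mat u = -1)) ∧
    Nonempty (Abelianization Ggrp ≃* Multiplicative (Fin 4 → ZMod 2)) := by
  refine ⟨Ggrp.commutator_eq_ker_parity.trans Ggrp.center_eq_ker_parity.symm, fun u => ?_,
    ⟨(QuotientGroup.quotientMulEquivOfEq Ggrp.commutator_eq_ker_parity).trans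
      (QuotientGroup.quotientKerEquivOfSurjective Ggrp.parity Ggrp.parity_surjective)⟩⟩
  rw [Ggrp.commutator_eq_ker_parity, Ggrp.mem_ker_parity_iff, ← Ggrp.mat_negOne, ← Ggrp.mat_one,
    Ggrp.mat_injective.eq_iff, Ggrp.mat_injective.eq_iff]
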